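/- arXiv:math/0404146 — 3 statements merged into one kernel-verified Lean document; each statement's English description precedes it below -/
import Mathlib

section
/- If T₀ and T₁ are infinite H-trees (subtrees of ⋃_{n<ω} ∏_{i<n} H(i) with root the empty sequence and no maximal nodes) that are both 𝔭-narrow with respect to a suitable simplified universality parameter 𝔭, then T₀ ∪ T₁ is an infinite H-tree that is 𝔭-narrow. -/
open Set Filter MeasureTheory NNReal ENNReal

namespace UnivForcing

abbrev Node := List ℕ

/-- `η` is a node respecting `H`: each entry is below the corresponding value of `H`. -/
def IsHNode (H : ℕ → ℕ) (η : Node) : Prop := ∀ i < η.length, η.getD i 0 < H i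

/-- A tree of finite sequences: contains the empty sequence and is closed under prefixes. -/
def IsTreeSet (T : Set Node) : Prop :=
  ([] : Node) ∈ T ∧ ∀ η ∈ T, ∀ ν : Node, ν <+: η → ν ∈ T

/-- The nodes of `T` of length exactly `n`. -/
def levelSet (T : Set Node) (n : ℕ) : Set Node := {η ∈ T | η.length = n}

/-- The nodes of `T` of length at most `n`. -/
def below (T : Set Node) (n : ℕ) : Set Node := {η ∈ T | η.length ≤ n}

/-- A finite `H`-tree of level `N`. -/
def IsFinTree (H : ℕ → ℕ) (T : Set Node) (N : ℕ) : Prop :=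
  IsTreeSet T ∧ (∀ η ∈ T, IsHNode H η ∧ η.length ≤ N) ∧
    ∀ η ∈ T, ∃ ν ∈ T, η <+: ν ∧ ν.length = N

/-- An infinite `H`-tree: a tree of `H`-nodes with no maximal nodes. -/
def IsInfTree (H : ℕ → ℕ) (T : Set Node) : Prop :=
  IsTreeSet T ∧ (∀ η ∈ T, IsHNode H η) ∧ ∀ η ∈ T, ∃ ν ∈ T, η <+: ν ∧ η ≠ ν

/-- A simplified universality parameter (Definition 2.2). -/
structure UnivParam (H : ℕ → ℕ) where
  G : Set (Set Node × ℕ × ℕ)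
  F : ℕ → ℕ
  G_tree : ∀ S a b, (S, a, b) ∈ G → ∃ N, IsFinTree H S N ∧ a ≤ b ∧ b ≤ N
  G_root : ((({([] : Node)}) : Set Node), 0, 0) ∈ G
  G_mono : ∀ S0 a0 b0 N0 S1 N1, (S0, a0, b0) ∈ G → IsFinTree H S0 N0 →
    IsFinTree H S1 N1 → N0 ≤ N1 → levelSet S1 N0 ⊆ S0 →
    ∀ a1 b1, a1 ≤ a0 → b0 ≤ b1 → b1 ≤ N1 → (S1, a1, b1) ∈ G
  F_incr : StrictMono F
  G_amalg : ∀ S0 a0 b0 S1 a1 b1 N S M,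
    (S0, a0, b0) ∈ G → (S1, a1, b1) ∈ G →
    IsFinTree H S0 N → IsFinTree H S1 N → IsFinTree H S M → M < N →
    levelSet S0 M ⊆ S → levelSet S1 M ⊆ S →
    M < a0 → b0 < a1 → F b1 < N →
    ∃ S', (S', a0, F b1) ∈ G ∧ IsFinTree H S' N ∧
      S0 ∪ S1 ⊆ S' ∧ levelSet S' M = levelSet S M

/-- `T` is narrow with respect to the family `G` (Definition 2.3(1)). -/
def IsNarrowG (G : Set (Set Node × ℕ × ℕ)) (T : Set Node) : Prop :=
  ∀ m, ∃ a, m ≤ a ∧ ∃ b, a < b ∧ (below T (b + 1), a, b) ∈ G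

def IsNarrow {H : ℕ → ℕ} (p : UnivParam H) (T : Set Node) : Prop := IsNarrowG p.G T

/-- Suitability of a universality parameter (Definition 3.5(1)). -/
def Suitable {H : ℕ → ℕ} (p : UnivParam H) : Prop :=
  (∀ n, ∃ N, n < N ∧ ∀ S a b NS, (S, a, b) ∈ p.G → IsFinTree H S NS → N ≤ a →
    ∀ η : Node, IsHNode H η → η.length = n →
      ∃ ν : Node, IsHNode H ν ∧ ν.length = NS ∧ η <+: ν ∧ ν ∉ S) ∧
  (∀ n, ∃ N, n < N ∧ ∀ S, IsFinTree H S n →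
    ∀ η : Node, IsHNode H η → η.length = N → η.take n ∈ S →
      ∃ S' a b, (S', a, b) ∈ p.G ∧ n < a ∧ a ≤ b ∧ b < N ∧ S ⊆ S' ∧
        levelSet S' n = levelSet S n ∧ η ∈ S')

/-- The space 𝒳 = ∏_{i<ω} H(i). -/
abbrev XSp (H : ℕ → ℕ) := (i : ℕ) → Fin (H i)

/-- The initial segment of length `n` of a point of 𝒳, as a node. -/
def branchNode (H : ℕ → ℕ) (x : XSp H) (n : ℕ) : Node :=
  List.ofFn fun i : Fin n => (x i : ℕ)

/-- The set of ω-branches `[T]` of a tree `T`, as a subset of 𝒳. -/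
def branches (H : ℕ → ℕ) (T : Set Node) : Set (XSp H) :=
  {x | ∀ n, branchNode H x n ∈ T}

/-- A closed narrow set: the branch set of a narrow infinite `H`-tree. -/
def NarrowClosedG (H : ℕ → ℕ) (G : Set (Set Node × ℕ × ℕ)) (A : Set (XSp H)) : Prop :=
  ∃ T, IsInfTree H T ∧ IsNarrowG G T ∧ A = branches H T

/-- The ideal ℐ⁰ generated by narrow closed sets. -/
def I0G (H : ℕ → ℕ) (G : Set (Set Node × ℕ × ℕ)) : Set (Set (XSp H)) :=
  {A | ∃ (n : ℕ) (f : Fin n → Set (XSp H)),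
    (∀ i, NarrowClosedG H G (f i)) ∧ A ⊆ ⋃ i, f i}

/-- The σ-ideal ℐ generated by narrow closed sets. -/
def IpG (H : ℕ → ℕ) (G : Set (Set Node × ℕ × ℕ)) : Set (Set (XSp H)) :=
  {A | ∃ f : ℕ → Set (XSp H), (∀ n, NarrowClosedG H G (f n)) ∧ A ⊆ ⋃ n, f n}

/-- A coordinate-wise permutation for `H`. -/
structure CWPerm (H : ℕ → ℕ) where
  f : ℕ → ℕ → ℕ
  bij : ∀ n, Set.BijOn (f n) (Set.Iio (H n)) (Set.Iio (H n))
  id_out : ∀ n k, H n ≤ k → f n k = k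

/-- The action of a coordinate-wise permutation on a node. -/
def CWPerm.apply {H : ℕ → ℕ} (π : CWPerm H) (η : Node) : Node :=
  η.mapIdx fun i k => π.f i k

/-- `π` is an `n`-coordinate-wise permutation. -/
def CWPerm.IsRat {H : ℕ → ℕ} (π : CWPerm H) (n : ℕ) : Prop :=
  ∀ m, n < m → ∀ k, π.f m k = k

/-- The action of a coordinate-wise permutation on the space 𝒳. -/
def CWPerm.act {H : ℕ → ℕ} (π : CWPerm H) (x : XSp H) : XSp H :=
  fun i => ⟨π.f i (x i).val, (π.bij i).mapsTo (x i).isLt⟩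

/-- A regular universality parameter (Definition 3.13). -/
def RegularParam {H : ℕ → ℕ} (p : UnivParam H) : Prop :=
  Suitable p ∧ ∀ π : CWPerm H, (∃ n, π.IsRat n) →
    ∀ S a b, (S, a, b) ∈ p.G → (π.apply '' S, a, b) ∈ p.G

/-- The additivity of an ideal (family of sets). -/
noncomputable def addIdeal {α : Type} (I : Set (Set α)) : Cardinal :=
  sInf {c | ∃ A : Set (Set α), A ⊆ I ∧ ⋃₀ A ∉ I ∧ Cardinal.mk A = c}

/-- The cofinality of an ideal (family of sets). -/
noncomputable def cofIdeal {α : Type} (I : Set (Set α)) : Cardinal :=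
  sInf {c | ∃ A : Set (Set α), A ⊆ I ∧ (∀ B ∈ I, ∃ C ∈ A, B ⊆ C) ∧ Cardinal.mk A = c}

/-- Eventual domination `f ≤* g`. -/
def evDomLE (f g : ℕ → ℕ) : Prop := ∀ᶠ n in atTop, f n ≤ g n

/-- The unbounding number 𝔟. -/
noncomputable def bNum : Cardinal :=
  sInf {c | ∃ F : Set (ℕ → ℕ), (∀ g, ∃ f ∈ F, ¬ evDomLE f g) ∧ Cardinal.mk F = c}

/-- The dominating number 𝔡. -/
noncomputable def dNum : Cardinal :=
  sInf {c | ∃ F : Set (ℕ → ℕ), (∀ g, ∃ f ∈ F, evDomLE g f) ∧ Cardinal.mk F = c}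

/-- The family 𝒢^{g,A}_𝐅 of Definition 2.8. -/
def GgA (H : ℕ → ℕ) (g : ℕ → ℕ) (A : Set ℕ) (FF : Set Node → NNReal) :
    Set (Set Node × ℕ × ℕ) :=
  {x | x = ((({([] : Node)}) : Set Node), 0, 0) ∨
    ∃ (S : Set Node) (a b N : ℕ), x = (S, a, b) ∧ IsFinTree H S N ∧ a ≤ b ∧ b ≤ N ∧
      (∀ ν ∈ levelSet S a, ∃ η : Node, IsHNode H η ∧ η.length = N ∧ ν <+: η ∧ η ∉ S) ∧
      ∃ Y : ℕ → Set Node,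
        (∀ i ∈ A ∩ Set.Ico a b, IsFinTree H (Y i) (i + 1) ∧ FF (Y i) ≤ (g i : NNReal)) ∧
        ∀ η ∈ levelSet S N, ∃ i ∈ A ∩ Set.Ico a b, η.take (i + 1) ∈ levelSet (Y i) (i + 1)}

/-- The family 𝒢^cmz_H of Definition 2.12. -/
def Gcmz (H : ℕ → ℕ) : Set (Set Node × ℕ × ℕ) :=
  {x | x = ((({([] : Node)}) : Set Node), 0, 0) ∨
    ∃ (S : Set Node) (a b N : ℕ), x = (S, a, b) ∧ IsFinTree H S N ∧ a ≤ b ∧ b ≤ N ∧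
      ((levelSet S b).ncard : ℝ) / (∏ i ∈ Finset.range b, (H i : ℝ)) ≤
        ∑ i ∈ Finset.Icc a b, 1 / ((i : ℝ) + 1) ^ 2}

/-- The level of a set of nodes (the supremum of the lengths of its elements). -/
noncomputable def treeLev (S : Set Node) : ℕ := sSup {n | ∃ η ∈ S, η.length = n}

/-- The function 𝐅₂ of Example 2.10(2). -/
noncomputable def F2fn (S : Set Node) : NNReal :=
  ((({k | ∃ η ∈ levelSet S (treeLev S), η.getLast? = some k}).ncard - 1 : ℕ) : NNReal)

/-- Immediate successors of a node in a tree. -/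
def succs (S : Set Node) (s : Node) : Set Node :=
  {ν ∈ S | s <+: ν ∧ ν.length = s.length + 1}

/-- The function 𝐅₀ of Example 2.10(1). -/
noncomputable def F0fn (S : Set Node) : NNReal :=
  ((sSup {m | ∃ s ∈ S, (∃ ν ∈ S, s <+: ν ∧ s ≠ ν) ∧ m = (succs S s).ncard - 1} : ℕ) : NNReal)

/-- The function 𝐅₁ of Example 2.10(1). -/
noncomputable def F1fn (S : Set Node) : NNReal :=
  (((levelSet S (treeLev S)).ncard - 1 : ℕ) : NNReal)

/-- The basic cylinder determined by a node. -/
def cyl (H : ℕ → ℕ) (η : Node) : Set (XSp H) := {x | branchNode H x η.length = η}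

/-- The mass of the cylinder of a node with respect to the product measure:
`1/∏_{i<lh(η)} H(i)`. -/
noncomputable def cylMass (H : ℕ → ℕ) (η : Node) : ℝ≥0∞ :=
  (∏ i ∈ Finset.range η.length, (H i : ℝ≥0∞))⁻¹

/-- `A` is null with respect to the product measure on 𝒳 (each factor carrying the
uniform probability measure): for every `ε > 0`, `A` can be covered by countably many
basic cylinders of total mass at most `ε`. -/
def ProdNull (H : ℕ → ℕ) (A : Set (XSp H)) : Prop :=
  ∀ ε : ℝ≥0∞, 0 < ε → ∃ C : ℕ → Node, A ⊆ (⋃ n, cyl H (C n)) ∧ ∑' n, cylMass H (C n) ≤ ε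

/-- A condition in the forcing notion Q^tree(𝔭). -/
def QCond (H : ℕ → ℕ) (p : UnivParam H) (q : ℕ × Set Node) : Prop :=
  IsInfTree H q.2 ∧ IsNarrow p q.2

/-- The order of the forcing notion Q^tree(𝔭). -/
def QLe (q r : ℕ × Set Node) : Prop :=
  q.1 ≤ r.1 ∧ q.2 ⊆ r.2 ∧ levelSet r.2 q.1 = levelSet q.2 q.1


/-- The subtree `T^{[ν]}` of nodes of `T` extending `ν`. -/
def aboveNode (T : Set Node) (ν : Node) : Set Node := {η ∈ T | ν <+: η}

/-- The set `Z(n̄, w̄)` of Proposition 4.6. -/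
def Zset (H : ℕ → ℕ) (A : Set ℕ) (nseq : ℕ → ℕ) (w : ℕ → Set ℕ) : Set (XSp H) :=
  {x | ∀ᶠ k in atTop, ∃ i ∈ A ∩ Set.Ico (nseq k) (nseq (k + 1)), ((x i : ℕ) ∈ w i)}

lemma extend_len {H : ℕ → ℕ} {T : Set Node} (hT : IsInfTree H T) :
    ∀ n, ∀ η ∈ T, η.length ≤ n → ∃ ν ∈ T, η <+: ν ∧ ν.length = n := by
  intro n
  induction n with
  | zero => exact fun η hη hlen => ⟨η, hη, List.prefix_refl _, Nat.le_zero.mp hlen⟩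
  | succ n ih =>
    intro η hη hlen
    rcases Nat.lt_or_ge η.length (n + 1) with h | h
    · obtain ⟨ν, hν, hpre, hlenν⟩ := ih η hη (Nat.lt_succ_iff.mp h)
      obtain ⟨ρ, hρ, hpre2, hne⟩ := hT.2.2 ν hν
      have hlt : n + 1 ≤ ρ.length := by
        rcases Nat.lt_or_ge n ρ.length with h' | h'
        · exact h'
        · have hle := hpre2.length_le
          exact absurd (hpre2.eq_of_length (by omega)) hne
      refine ⟨ρ.take (n + 1), hT.1.2 ρ hρ _ (List.take_prefix _ _), ?_, ?_⟩
      · exact hpre.trans (List.prefix_take_iff.mpr ⟨hpre2, by omega⟩)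
      · simp [List.length_take]; omega
    · exact ⟨η, hη, List.prefix_refl _, le_antisymm hlen h⟩

lemma below_finTree {H : ℕ → ℕ} {T : Set Node} (hT : IsInfTree H T) (N : ℕ) :
    IsFinTree H (below T N) N := by
  refine ⟨⟨⟨hT.1.1, by simp [below]⟩, ?_⟩, ?_, ?_⟩
  · rintro η ⟨hη, hlen⟩ ν hpre
    exact ⟨hT.1.2 η hη ν hpre, le_trans hpre.length_le hlen⟩
  · rintro η ⟨hη, hlen⟩
    exact ⟨hT.2.1 η hη, hlen⟩
  · rintro η ⟨hη, hlen⟩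
    obtain ⟨ν, hν, hpre, hlenν⟩ := extend_len hT N η hη hlen
    exact ⟨ν, ⟨hν, hlenν.le⟩, hpre, hlenν⟩

/-- Proposition 3.6(2): the union of two 𝔭-narrow infinite `H`-trees is an infinite
𝔭-narrow `H`-tree, for a suitable simplified universality parameter 𝔭. -/
theorem narrow_union_narrow (H : ℕ → ℕ) (hH : ∀ n, 2 ≤ H n) (p : UnivParam H)
    (hp : Suitable p) (T0 T1 : Set Node) (h0 : IsInfTree H T0) (h1 : IsInfTree H T1)
    (hn0 : IsNarrow p T0) (hn1 : IsNarrow p T1) :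
    IsInfTree H (T0 ∪ T1) ∧ IsNarrow p (T0 ∪ T1) := by
  have hunion : IsInfTree H (T0 ∪ T1) := by
    refine ⟨⟨Or.inl h0.1.1, ?_⟩, ?_, ?_⟩
    · rintro η (hη | hη) ν hpre
      · exact Or.inl (h0.1.2 η hη ν hpre)
      · exact Or.inr (h1.1.2 η hη ν hpre)
    · rintro η (hη | hη)
      · exact h0.2.1 η hη
      · exact h1.2.1 η hη
    · rintro η (hη | hη)
      · obtain ⟨ν, hν, h⟩ := h0.2.2 η hη; exact ⟨ν, Or.inl hν, h⟩
      · obtain ⟨ν, hν, h⟩ := h1.2.2 η hη; exact ⟨ν, Or.inr hν, h⟩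
  refine ⟨hunion, fun m => ?_⟩
  obtain ⟨a0, ha0, b0, hab0, hG0⟩ := hn0 (m + 1)
  obtain ⟨a1, ha1, b1, hab1, hG1⟩ := hn1 (b0 + 1)
  set b := p.F b1 with hb
  have hb1b : b1 ≤ b := p.F_incr.le_apply
  set N := b + 1 with hN
  -- lift both witnesses to level N
  have hl0 : (below T0 N, a0, b0) ∈ p.G := by
    refine p.G_mono _ a0 b0 (b0 + 1) _ N hG0 (below_finTree h0 _) (below_finTree h0 _)
      (by omega) ?_ a0 b0 le_rfl le_rfl (by omega)
    rintro η ⟨⟨hη, _⟩, hlen⟩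
    exact ⟨hη, hlen.le⟩
  have hl1 : (below T1 N, a1, b1) ∈ p.G := by
    refine p.G_mono _ a1 b1 (b1 + 1) _ N hG1 (below_finTree h1 _) (below_finTree h1 _)
      (by omega) ?_ a1 b1 le_rfl le_rfl (by omega)
    rintro η ⟨⟨hη, _⟩, hlen⟩
    exact ⟨hη, hlen.le⟩
  obtain ⟨S', hS'G, hS'fin, hsub, -⟩ :=
    p.G_amalg (below T0 N) a0 b0 (below T1 N) a1 b1 N (below (T0 ∪ T1) m) m
      hl0 hl1 (below_finTree h0 _) (below_finTree h1 _) (below_finTree hunion _)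
      (by omega)
      (by rintro η ⟨⟨hη, _⟩, hlen⟩; exact ⟨Or.inl hη, hlen.le⟩)
      (by rintro η ⟨⟨hη, _⟩, hlen⟩; exact ⟨Or.inr hη, hlen.le⟩)
      (by omega) (by omega) (by omega)
  refine ⟨a0, by omega, b, by omega, ?_⟩
  refine p.G_mono S' a0 b N _ (b + 1) hS'G hS'fin (below_finTree hunion _)
    le_rfl ?_ a0 b le_rfl le_rfl (by omega)
  rintro η ⟨⟨(hη | hη), hlen⟩, hlenN⟩
  · exact hsub (Or.inl ⟨hη, hlenN.le⟩)
  · exact hsub (Or.inr ⟨hη, hlenN.le⟩)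

end UnivForcing
end

section
/- The forcing notion Q^tree(𝔭) associated to a simplified universality parameter 𝔭 is σ-centered; that is, Q^tree(𝔭) can be written as a countable union of subsets each of which is directed upward (any two conditions in the same piece have a common upper bound in that piece). -/
open Set Filter MeasureTheory NNReal ENNReal

namespace UnivForcing

/-- In an infinite tree, every node has extensions of arbitrarily large length. -/
lemma exists_le_length {H : ℕ → ℕ} {T : Set Node} (hT : IsInfTree H T)
    {η : Node} (hη : η ∈ T) (L : ℕ) : ∃ ν ∈ T, η <+: ν ∧ L ≤ ν.length := by
  induction L with
  | zero => exact ⟨η, hη, List.prefix_refl _, Nat.zero_le _⟩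
  | succ L ih =>
    obtain ⟨ν, hν, hpre, hlen⟩ := ih
    obtain ⟨ν', hν', hpre', hne⟩ := hT.2.2 ν hν
    refine ⟨ν', hν', hpre.trans hpre', ?_⟩
    have h1 := hpre'.length_le
    have hlt : ν.length < ν'.length :=
      lt_of_le_of_ne h1 (fun h => hne (hpre'.eq_of_length h))
    omega

/-- In an infinite tree, every node has an extension of any prescribed larger length. -/
lemma exists_eq_length {H : ℕ → ℕ} {T : Set Node} (hT : IsInfTree H T)
    {η : Node} (hη : η ∈ T) {L : ℕ} (hL : η.length ≤ L) :
    ∃ ν ∈ T, η <+: ν ∧ ν.length = L := by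
  obtain ⟨ν, hν, hpre, hlen⟩ := exists_le_length hT hη L
  refine ⟨ν.take L, hT.1.2 ν hν _ (List.take_prefix _ _), ?_, by simp [hlen]⟩
  rw [List.prefix_take_iff]
  exact ⟨hpre, hL⟩

/-- The union of two infinite `H`-trees is an infinite `H`-tree. -/
lemma union_infTree {H : ℕ → ℕ} {T0 T1 : Set Node} (h0 : IsInfTree H T0)
    (h1 : IsInfTree H T1) : IsInfTree H (T0 ∪ T1) := by
  refine ⟨⟨Or.inl h0.1.1, ?_⟩, ?_, ?_⟩
  · rintro η (hη | hη) ν hpre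
    · exact Or.inl (h0.1.2 η hη ν hpre)
    · exact Or.inr (h1.1.2 η hη ν hpre)
  · rintro η (hη | hη)
    · exact h0.2.1 η hη
    · exact h1.2.1 η hη
  · rintro η (hη | hη)
    · obtain ⟨ν, hν, h⟩ := h0.2.2 η hη; exact ⟨ν, Or.inl hν, h⟩
    · obtain ⟨ν, hν, h⟩ := h1.2.2 η hη; exact ⟨ν, Or.inr hν, h⟩

lemma levelSet_union (A B : Set Node) (n : ℕ) :
    levelSet (A ∪ B) n = levelSet A n ∪ levelSet B n := by
  ext η; simp only [levelSet, Set.mem_setOf_eq, Set.mem_union, Set.mem_setOf_eq]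
  tauto

/-- A level set of a set of `H`-nodes is finite. -/
lemma levelSet_finite {H : ℕ → ℕ} {T : Set Node} (hT : ∀ η ∈ T, IsHNode H η) (N : ℕ) :
    (levelSet T N).Finite := by
  have himg : ((fun η : Node => fun i : Fin N => η.getD i 0) '' levelSet T N).Finite := by
    refine Set.Finite.subset (Set.Finite.pi fun i : Fin N => Set.finite_Iio (H i)) ?_
    rintro g ⟨η, ⟨hη, hlen⟩, rfl⟩
    intro i _
    exact hT η hη i (by omega)
  refine Set.Finite.of_finite_image himg ?_
  rintro η ⟨hη, hlenη⟩ ν ⟨hν, hlenν⟩ heq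
  refine List.ext_getElem (by omega) ?_
  intro i h1 h2
  have := congrFun heq ⟨i, by omega⟩
  simpa [List.getD_eq_getElem?_getD, List.getElem?_eq_getElem, h1, h2] using this

/-- Proposition 3.6(2): the union of two narrow infinite `H`-trees is narrow. -/
lemma narrow_union {H : ℕ → ℕ} (p : UnivParam H) {T0 T1 : Set Node}
    (hT0 : IsInfTree H T0) (hT1 : IsInfTree H T1)
    (hn0 : IsNarrow p T0) (hn1 : IsNarrow p T1) : IsNarrow p (T0 ∪ T1) := by
  intro m
  obtain ⟨a0, ha0, b0, hab0, hG0⟩ := hn0 (max m 1)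
  obtain ⟨a1, ha1, b1, hab1, hG1⟩ := hn1 (b0 + 1)
  have hb1F : b1 ≤ p.F b1 := p.F_incr.le_apply
  set N : ℕ := p.F b1 + 1 with hN
  have hunion : IsInfTree H (T0 ∪ T1) := union_infTree hT0 hT1
  -- lift both trees to level N
  have h0N : (below T0 N, a0, b0) ∈ p.G := by
    refine p.G_mono _ _ _ (b0 + 1) _ N hG0 (below_finTree hT0 _) (below_finTree hT0 _)
      (by omega) ?_ a0 b0 le_rfl le_rfl (by omega)
    rintro η ⟨⟨hη, _⟩, hlen⟩
    exact ⟨hη, le_of_eq hlen⟩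
  have h1N : (below T1 N, a1, b1) ∈ p.G := by
    refine p.G_mono _ _ _ (b1 + 1) _ N hG1 (below_finTree hT1 _) (below_finTree hT1 _)
      (by omega) ?_ a1 b1 le_rfl le_rfl (by omega)
    rintro η ⟨⟨hη, _⟩, hlen⟩
    exact ⟨hη, le_of_eq hlen⟩
  -- the trivial root tree
  have hroot : IsFinTree H ({([] : Node)} : Set Node) 0 := by
    refine ⟨⟨rfl, ?_⟩, ?_, ?_⟩
    · rintro η rfl ν hpre
      simpa using List.prefix_nil.mp hpre
    · rintro η rfl
      exact ⟨fun i hi => by simp at hi, le_rfl⟩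
    · rintro η rfl
      exact ⟨[], rfl, List.prefix_refl _, rfl⟩
  have hlev0 : ∀ (S : Set Node), levelSet S 0 ⊆ ({([] : Node)} : Set Node) := by
    rintro S η ⟨_, hlen⟩
    simpa using List.length_eq_zero_iff.mp hlen
  -- amalgamate
  obtain ⟨S', hS'G, hS'fin, hsub, _⟩ :=
    p.G_amalg (below T0 N) a0 b0 (below T1 N) a1 b1 N ({([] : Node)} : Set Node) 0
      h0N h1N (below_finTree hT0 N) (below_finTree hT1 N) hroot (by omega)
      (hlev0 _) (hlev0 _) (by omega) (by omega) (by omega)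
  -- shrink to `below (T0 ∪ T1) N`
  have hfinal : (below (T0 ∪ T1) N, a0, p.F b1) ∈ p.G := by
    refine p.G_mono S' a0 (p.F b1) N _ N hS'G hS'fin (below_finTree hunion N)
      le_rfl ?_ a0 (p.F b1) le_rfl le_rfl (by omega)
    rintro η ⟨⟨hη, hlen⟩, _⟩
    rcases hη with hη | hη
    · exact hsub (Or.inl ⟨hη, hlen⟩)
    · exact hsub (Or.inr ⟨hη, hlen⟩)
  exact ⟨a0, le_trans (le_max_left m 1) ha0, p.F b1, by omega, hfinal⟩

/-- Proposition 2.4: the forcing notion `Q^tree(𝔭)` is σ-centered: it is a countable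
union of upward directed pieces. -/
theorem Qtree_sigmaCentered (H : ℕ → ℕ) (hH : ∀ n, 2 ≤ H n) (p : UnivParam H) :
    ∃ C : ℕ → Set (ℕ × Set Node),
      (∀ n, ∀ q ∈ C n, QCond H p q) ∧
      (∀ q, QCond H p q → ∃ n, q ∈ C n) ∧
      (∀ n, ∀ q ∈ C n, ∀ r ∈ C n, ∃ s ∈ C n, QLe q s ∧ QLe r s) := by
  obtain ⟨e, he⟩ := exists_surjective_nat (ℕ × Finset Node)
  refine ⟨fun n => {q | QCond H p q ∧ q.1 = (e n).1 ∧ levelSet q.2 q.1 = ↑(e n).2},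
    fun n q hq => hq.1, ?_, ?_⟩
  · intro q hq
    have hfin : (levelSet q.2 q.1).Finite := levelSet_finite hq.1.2.1 _
    obtain ⟨n, hn⟩ := he (q.1, hfin.toFinset)
    refine ⟨n, hq, ?_, ?_⟩
    · rw [hn]
    · rw [hn]; simp [hfin.coe_toFinset]
  · intro n q hq r hr
    have hN : r.1 = q.1 := by rw [hr.2.1, hq.2.1]
    have hlev : levelSet r.2 q.1 = levelSet q.2 q.1 := by
      rw [← hN, hr.2.2, hN]; exact hq.2.2.symm
    have hsQ : QCond H p (q.1, q.2 ∪ r.2) :=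
      ⟨union_infTree hq.1.1 hr.1.1, narrow_union p hq.1.1 hr.1.1 hq.1.2 hr.1.2⟩
    have hlevU : levelSet (q.2 ∪ r.2) q.1 = levelSet q.2 q.1 := by
      rw [levelSet_union, hlev, Set.union_self]
    refine ⟨(q.1, q.2 ∪ r.2), ⟨hsQ, hq.2.1, by rw [hlevU, hq.2.2]⟩, ?_, ?_⟩
    · exact ⟨le_rfl, Set.subset_union_left, hlevU⟩
    · refine ⟨le_of_eq hN, Set.subset_union_right, ?_⟩
      rw [hN, hlevU, ← hlev]

end UnivForcing
end

section
/- For a regular universality parameter 𝔭, the ideal ℐ⁰_𝔭 generated by 𝔭-narrow closed subsets of 𝒳 is invariant under coordinate-wise permutations: if A ∈ ℐ⁰_𝔭 and π̄ is a coordinate-wise permutation for H, then π̄[A] ∈ ℐ⁰_𝔭. -/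
open Set Filter MeasureTheory NNReal ENNReal

namespace UnivForcing

lemma CWPerm.length_apply {H : ℕ → ℕ} (π : CWPerm H) (η : Node) :
    (π.apply η).length = η.length := List.length_mapIdx

lemma CWPerm.getElem_apply {H : ℕ → ℕ} (π : CWPerm H) (η : Node) (i : ℕ)
    (h : i < (π.apply η).length) : (π.apply η)[i] = π.f i (η[i]'(by
      rwa [π.length_apply] at h)) := by
  simp [CWPerm.apply, List.getElem_mapIdx]

lemma CWPerm.apply_take {H : ℕ → ℕ} (π : CWPerm H) (η : Node) (n : ℕ) :
    π.apply (η.take n) = (π.apply η).take n := by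
  apply List.ext_getElem
  · simp [CWPerm.length_apply]
  · intro i h1 h2
    rw [π.getElem_apply, List.getElem_take, List.getElem_take, π.getElem_apply]

lemma CWPerm.apply_prefix {H : ℕ → ℕ} (π : CWPerm H) {ν η : Node} (h : ν <+: η) :
    π.apply ν <+: π.apply η := by
  rw [List.prefix_iff_eq_take] at h
  rw [h, π.apply_take]
  exact List.take_prefix _ _

lemma CWPerm.apply_isHNode {H : ℕ → ℕ} (π : CWPerm H) {η : Node} (h : IsHNode H η) :
    IsHNode H (π.apply η) := by
  intro i hi
  rw [π.length_apply] at hi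
  have h1 : i < (π.apply η).length := by rwa [π.length_apply]
  rw [List.getD_eq_getElem _ _ h1, π.getElem_apply]
  exact (π.bij i).mapsTo (by
    have := h i hi
    rwa [List.getD_eq_getElem _ _ hi] at this)

lemma CWPerm.apply_congr {H : ℕ → ℕ} (π π' : CWPerm H) (η : Node)
    (h : ∀ i < η.length, ∀ k, π.f i k = π'.f i k) : π.apply η = π'.apply η := by
  apply List.ext_getElem
  · simp [CWPerm.length_apply]
  · intro i h1 h2
    rw [π.getElem_apply, π'.getElem_apply]
    exact h i (by rwa [π.length_apply] at h1) _

/-- The truncation of a coordinate-wise permutation: identity above level `b`. -/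
def CWPerm.trunc {H : ℕ → ℕ} (π : CWPerm H) (b : ℕ) : CWPerm H where
  f n k := if n ≤ b then π.f n k else k
  bij n := by
    by_cases h : n ≤ b
    · simpa [h] using π.bij n
    · simp only [h, ↓reduceIte]; exact Set.bijOn_id _
  id_out n k hk := by
    by_cases h : n ≤ b
    · simp [h, π.id_out n k hk]
    · simp [h]

lemma CWPerm.trunc_isRat {H : ℕ → ℕ} (π : CWPerm H) (b : ℕ) : (π.trunc b).IsRat b := by
  intro m hm k
  simp [CWPerm.trunc, Nat.not_le.mpr hm]

lemma CWPerm.trunc_apply_eq {H : ℕ → ℕ} (π : CWPerm H) (b : ℕ) (η : Node)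
    (h : η.length ≤ b + 1) : (π.trunc b).apply η = π.apply η := by
  apply CWPerm.apply_congr
  intro i hi k
  have : i ≤ b := by omega
  simp [CWPerm.trunc, this]

lemma apply_image_infTree {H : ℕ → ℕ} (π : CWPerm H) {T : Set Node}
    (hT : IsInfTree H T) : IsInfTree H (π.apply '' T) := by
  obtain ⟨⟨hroot, hpref⟩, hnode, hext⟩ := hT
  refine ⟨⟨⟨[], hroot, rfl⟩, ?_⟩, ?_, ?_⟩
  · rintro η ⟨η₀, hη₀, rfl⟩ ν hν
    have hlen : ν.length ≤ η₀.length := by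
      have := hν.length_le; rwa [π.length_apply] at this
    refine ⟨η₀.take ν.length, hpref _ hη₀ _ (η₀.take_prefix _), ?_⟩
    rw [π.apply_take]
    rw [List.prefix_iff_eq_take] at hν
    exact hν.symm
  · rintro η ⟨η₀, hη₀, rfl⟩
    exact π.apply_isHNode (hnode _ hη₀)
  · rintro η ⟨η₀, hη₀, rfl⟩
    obtain ⟨ν₀, hν₀, hpre, hne⟩ := hext _ hη₀
    refine ⟨π.apply ν₀, ⟨ν₀, hν₀, rfl⟩, π.apply_prefix hpre, ?_⟩
    intro heq
    apply hne
    have hlt : η₀.length < ν₀.length := by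
      rcases Nat.lt_or_ge η₀.length ν₀.length with h | h
      · exact h
      · exact absurd (List.IsPrefix.eq_of_length_le hpre h) hne
    have := congrArg List.length heq
    rw [π.length_apply, π.length_apply] at this
    omega
  
lemma below_apply_image {H : ℕ → ℕ} (π : CWPerm H) (T : Set Node) (n : ℕ) :
    below (π.apply '' T) n = π.apply '' below T n := by
  ext η
  constructor
  · rintro ⟨⟨η₀, hη₀, rfl⟩, hlen⟩
    exact ⟨η₀, ⟨hη₀, by rwa [π.length_apply] at hlen⟩, rfl⟩
  · rintro ⟨η₀, ⟨hη₀, hlen⟩, rfl⟩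
    exact ⟨⟨η₀, hη₀, rfl⟩, by rwa [π.length_apply]⟩

lemma branchNode_act {H : ℕ → ℕ} (π : CWPerm H) (x : XSp H) (n : ℕ) :
    branchNode H (π.act x) n = π.apply (branchNode H x n) := by
  apply List.ext_getElem
  · simp [branchNode, CWPerm.length_apply]
  · intro i h1 h2
    rw [π.getElem_apply]
    simp only [branchNode, List.getElem_ofFn]
    rfl

/-- Proposition 3.15(1): the ideal ℐ⁰_𝔭 is invariant under coordinate-wise
permutations. -/
theorem I0_perm_invariant (H : ℕ → ℕ) (hH : ∀ n, 2 ≤ H n) (p : UnivParam H)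
    (hp : RegularParam p) (A : Set (XSp H)) (hA : A ∈ I0G H p.G) (π : CWPerm H) :
    CWPerm.act π '' A ∈ I0G H p.G := by
  obtain ⟨n, f, hf, hcov⟩ := hA
  choose T hTinf hTnar hfT using hf
  refine ⟨n, fun i => branches H (π.apply '' T i), fun i => ⟨π.apply '' T i,
    apply_image_infTree π (hTinf i), ?_, rfl⟩, ?_⟩
  · -- narrowness of the image tree
    intro m
    obtain ⟨a, hma, b, hab, hG⟩ := hTnar i m
    refine ⟨a, hma, b, hab, ?_⟩
    have hreg := hp.2 (π.trunc b) ⟨b, π.trunc_isRat b⟩ _ _ _ hG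
    have himg : (π.trunc b).apply '' below (T i) (b + 1)
        = π.apply '' below (T i) (b + 1) := by
      apply Set.image_congr
      rintro η ⟨-, hlen⟩
      exact π.trunc_apply_eq b η hlen
    rwa [himg, ← below_apply_image] at hreg
  · -- coverage
    rintro y ⟨x, hx, rfl⟩
    obtain ⟨s, ⟨i, rfl⟩, hxs⟩ := hcov hx
    refine Set.mem_iUnion.mpr ⟨i, ?_⟩
    intro m
    rw [branchNode_act]
    replace hxs : x ∈ branches H (T i) := by rw [← hfT]; exact hxs
    exact ⟨branchNode H x m, hxs m, rfl⟩

end UnivForcing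
end
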